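/- arXiv:1112.4813 — 9 statements merged into one kernel-verified Lean document; each statement's English description precedes it below -/
import Mathlib

section
/- (Generalized Routh theorem) Let A, B, C be three non-collinear points in the plane and x,y,z,u,v,w real numbers with (1+x)(1+y)(1+z)(1+u)(1+v)(1+w) ≠ 0 and (1+x+xv)(1+y+yw)(1+z+zu) ≠ 0. Define A_x on line BC by vector(B,A_x)=x·vector(A_x,C), similarly A_u, B_v, B_y on line CA by vector(C,B_y)=y·vector(B_y,A), and C_w, C_z on line AB by vector(A,C_z)=z·vector(C_z,B). Let P be the intersection of lines AA_x and BB_v, Q the intersection of BB_y and CC_w, R the intersection of CC_z and AA_u. Then signedArea(PQR)/signedArea(ABC) = (1 - xyw - xzv - uyz + xyz + xyzuvw)/((1+x+xv)(1+y+yw)(1+z+zu)). -/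
noncomputable def signedArea (P Q R : ℝ × ℝ) : ℝ :=
  ((Q.1 - P.1) * (R.2 - P.2) - (R.1 - P.1) * (Q.2 - P.2)) / 2

def onLine (P A B : ℝ × ℝ) : Prop := P ∈ affineSpan ℝ ({A, B} : Set (ℝ × ℝ))

/-!
Comparing the two descriptions of `P` as a point of `AA_x` and of `BB_v`, and using that
affinely independent points have unique barycentric coordinates, gives
`(1 + x + xv) P = xv A + B + x C`, and cyclically for `Q` and `R`. The signed area of three
points given in barycentric coordinates is the determinant of their coordinate matrix times the
signed area of the reference triangle, and `det [[xv, 1, x], [y, yw, 1], [1, z, zu]]` expands to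
the numerator of the claimed ratio.
-/

open scoped Affine

section Cevians

variable {k V : Type*} [Field k] [AddCommGroup V] [Module k V]

theorem AffineIndependent.eq_zero_of_add_add_eq_zero {A B C : V}
    (h : AffineIndependent k ![A, B, C]) {a b c : k} (hsum : a + b + c = 0)
    (hcomb : a • A + b • B + c • C = 0) : a = 0 ∧ b = 0 ∧ c = 0 := by
  have := h.eq_zero_of_sum_eq_zero (s := Finset.univ) (w := ![a, b, c])
    (by simpa [Fin.sum_univ_three] using hsum) (by simpa [Fin.sum_univ_three] using hcomb)
  exact ⟨this 0 (by simp), this 1 (by simp), this 2 (by simp)⟩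

theorem smul_eq_of_mem_cevians {A B C Ax Bv P : V} {x v : k}
    (hABC : ¬ Collinear k {A, B, C}) (hx : 1 + x ≠ 0) (hv : 1 + v ≠ 0)
    (hAx : Ax - B = x • (C - Ax)) (hBv : Bv - C = v • (A - Bv))
    (hPA : P ∈ line[k, A, Ax]) (hPB : P ∈ line[k, B, Bv]) :
    (1 + x + x * v) • P = (x * v) • A + B + x • C := by
  obtain ⟨s, rfl⟩ := mem_affineSpan_pair_iff_exists_lineMap_eq.1 hPA
  obtain ⟨t, ht⟩ := mem_affineSpan_pair_iff_exists_lineMap_eq.1 hPB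
  simp only [AffineMap.lineMap_apply_module] at ht ⊢
  -- `(1 + x) (1 + v) P`, written through either line, is a combination of `A`, `B`, `C`;
  -- the weights below are the difference of the two.
  obtain ⟨-, hb, hc⟩ := (affineIndependent_iff_not_collinear_set.2 hABC).eq_zero_of_add_add_eq_zero
    (a := (1 + v) * (1 + x) * (1 - s) - (1 + x) * t * v)
    (b := (1 + v) * s - (1 + x) * (1 + v) * (1 - t)) (c := (1 + v) * s * x - (1 + x) * t)
    (by ring)
    (by linear_combination (norm := module) -((1 + v) * (1 + x)) • ht - ((1 + v) * s) • hAx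
      + ((1 + x) * t) • hBv)
  have hs : s * (1 + x + x * v) = 1 + x :=
    mul_left_cancel₀ hv (by linear_combination hb + (1 + v) * hc)
  apply smul_right_injective V hx
  linear_combination (norm := module) hs • (B + x • C - (1 + x) • A) + ((1 + x + x * v) * s) • hAx

end Cevians

theorem signedArea_ne_zero_of_not_collinear {A B C : ℝ × ℝ}
    (h : ¬ Collinear ℝ {A, B, C}) : signedArea A B C ≠ 0 := by
  have hABC := affineIndependent_iff_not_collinear_set.2 h
  intro h0
  replace h0 : (B.1 - A.1) * (C.2 - A.2) = (C.1 - A.1) * (B.2 - A.2) := by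
    unfold signedArea at h0
    linarith
  -- Each weight vector below kills one coordinate identically and the other one by `h0`.
  obtain ⟨-, hC₂, hB₂⟩ := hABC.eq_zero_of_add_add_eq_zero
    (a := B.2 - C.2) (b := C.2 - A.2) (c := A.2 - B.2) (by ring)
    (Prod.ext (by simp only [Prod.fst_add, Prod.smul_fst, smul_eq_mul, Prod.fst_zero]
                  linear_combination h0)
              (by simp only [Prod.snd_add, Prod.smul_snd, smul_eq_mul, Prod.snd_zero]
                  ring))
  obtain ⟨-, hC₁, hB₁⟩ := hABC.eq_zero_of_add_add_eq_zero
    (a := B.1 - C.1) (b := C.1 - A.1) (c := A.1 - B.1) (by ring)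
    (Prod.ext (by simp only [Prod.fst_add, Prod.smul_fst, smul_eq_mul, Prod.fst_zero]
                  ring)
              (by simp only [Prod.snd_add, Prod.smul_snd, smul_eq_mul, Prod.snd_zero]
                  linear_combination -h0))
  have hAB : A = B := Prod.ext (by linarith) (by linarith)
  exact absurd (hABC.injective (a₁ := 0) (a₂ := 1) hAB) (by decide)

theorem mul_signedArea_eq_det_mul {A B C P Q R : ℝ × ℝ}
    {d₁ d₂ d₃ a₁ b₁ c₁ a₂ b₂ c₂ a₃ b₃ c₃ : ℝ} (hd₁ : d₁ ≠ 0) (hd₂ : d₂ ≠ 0) (hd₃ : d₃ ≠ 0)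
    (h₁ : a₁ + b₁ + c₁ = d₁) (h₂ : a₂ + b₂ + c₂ = d₂) (h₃ : a₃ + b₃ + c₃ = d₃)
    (hP : d₁ • P = a₁ • A + b₁ • B + c₁ • C) (hQ : d₂ • Q = a₂ • A + b₂ • B + c₂ • C)
    (hR : d₃ • R = a₃ • A + b₃ • B + c₃ • C) :
    d₁ * d₂ * d₃ * signedArea P Q R =
      !![a₁, b₁, c₁; a₂, b₂, c₂; a₃, b₃, c₃].det * signedArea A B C := by
  rw [← eq_inv_smul_iff₀ hd₁] at hP
  rw [← eq_inv_smul_iff₀ hd₂] at hQ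
  rw [← eq_inv_smul_iff₀ hd₃] at hR
  subst hP hQ hR h₁ h₂ h₃
  simp only [signedArea, smul_add, Prod.fst_add, Prod.smul_fst, smul_eq_mul, Prod.snd_add,
    Prod.smul_snd, Matrix.det_fin_three, Matrix.of_apply, Matrix.cons_val', Matrix.cons_val_zero,
    Matrix.cons_val_fin_one, Matrix.cons_val_one, Matrix.cons_val]
  field_simp
  ring

/-- Generalized Routh's theorem. -/
theorem generalized_routh (A B C Ax Au Bv By Cw Cz P Q R : ℝ × ℝ) (x y z u v w : ℝ)
    (hABC : ¬ Collinear ℝ ({A, B, C} : Set (ℝ × ℝ)))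
    (hden1 : (1 + x) * (1 + y) * (1 + z) * (1 + u) * (1 + v) * (1 + w) ≠ 0)
    (hden2 : (1 + x + x * v) * (1 + y + y * w) * (1 + z + z * u) ≠ 0)
    (hAx : Ax - B = x • (C - Ax)) (hAu : Au - B = u • (C - Au))
    (hBy : By - C = y • (A - By)) (hBv : Bv - C = v • (A - Bv))
    (hCz : Cz - A = z • (B - Cz)) (hCw : Cw - A = w • (B - Cw))
    (hP1 : onLine P A Ax) (hP2 : onLine P B Bv)
    (hQ1 : onLine Q B By) (hQ2 : onLine Q C Cw)
    (hR1 : onLine R C Cz) (hR2 : onLine R A Au) :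
    signedArea P Q R / signedArea A B C =
      (1 - x * y * w - x * z * v - u * y * z + x * y * z + x * y * z * u * v * w) /
        ((1 + x + x * v) * (1 + y + y * w) * (1 + z + z * u)) := by
  obtain ⟨⟨⟨⟨⟨hx, hy⟩, hz⟩, hu⟩, hv⟩, hw⟩ := by simpa only [mul_ne_zero_iff] using hden1
  obtain ⟨⟨hdP, hdQ⟩, hdR⟩ := by simpa only [mul_ne_zero_iff] using hden2
  have hBCA : ¬ Collinear ℝ ({B, C, A} : Set (ℝ × ℝ)) := by
    rwa [Set.insert_comm, Set.pair_comm] at hABC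
  have hCAB : ¬ Collinear ℝ ({C, A, B} : Set (ℝ × ℝ)) := by
    rwa [Set.insert_comm, Set.pair_comm] at hBCA
  have hP := smul_eq_of_mem_cevians hABC hx hv hAx hBv hP1 hP2
  have hQ := smul_eq_of_mem_cevians hBCA hy hw hBy hCw hQ1 hQ2
  have hR := smul_eq_of_mem_cevians hCAB hz hu hCz hAu hR1 hR2
  have harea : (1 + x + x * v) * (1 + y + y * w) * (1 + z + z * u) * signedArea P Q R =
      !![x * v, 1, x; y, y * w, 1; 1, z, z * u].det * signedArea A B C :=
    mul_signedArea_eq_det_mul hdP hdQ hdR (by ring) (by ring) (by ring)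
      (by rw [hP]; module) (by rw [hQ]; module) (by rw [hR]; module)
  rw [div_eq_div_iff (signedArea_ne_zero_of_not_collinear hABC) hden2]
  simp only [Matrix.det_fin_three, Matrix.of_apply, Matrix.cons_val', Matrix.cons_val_zero,
    Matrix.cons_val_fin_one, Matrix.cons_val_one, Matrix.cons_val] at harea
  linear_combination harea
end

section
/- (Menelaus) Let A, B, C be non-collinear points and x,y,z real numbers with (1+x)(1+y)(1+z) ≠ 0. With A_x, B_y, C_z defined by vector(B,A_x)=x·vector(A_x,C), vector(C,B_y)=y·vector(B_y,A), vector(A,C_z)=z·vector(C_z,B), the points A_x, B_y, C_z are collinear if and only if xyz = -1. -/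
/-!
Write `Ax, By, Cz` as affine combinations of `A, B, C`, with weights `(0, 1, x) / (1 + x)`,
`(y, 0, 1) / (1 + y)` and `(1, z, 0) / (1 + z)`. The signed area `cross (By - Ax) (Cz - Ax)` is
`cross (B - A) (C - A)` times the determinant of these weights,
`(1 + x * y * z) / ((1 + x) * (1 + y) * (1 + z))`, and three points of the plane are collinear
exactly when their signed area vanishes.
-/

theorem collinear_iff_mem_affineSpan_pair {k V P : Type*} [DivisionRing k] [AddCommGroup V]
    [Module k V] [AddTorsor V P] {p q : P} (r : P) (hpq : p ≠ q) :
    Collinear k ({p, q, r} : Set P) ↔ r ∈ line[k, p, q] := by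
  refine ⟨fun h => h.mem_affineSpan_of_mem_of_ne (by simp) (by simp) (by simp) hpq, fun h => ?_⟩
  rw [Set.pair_comm q r, Set.insert_comm p r]
  exact collinear_insert_of_mem_affineSpan_pair h

theorem eq_inv_smul_of_sub_eq_smul {K V : Type*} [Field K] [AddCommGroup V] [Module K V]
    {P B C : V} {x : K} (hx : 1 + x ≠ 0) (h : P - B = x • (C - P)) :
    P = (1 + x)⁻¹ • (B + x • C) := by
  rw [eq_inv_smul_iff₀ hx]
  linear_combination (norm := module) h

namespace Prod

variable {K : Type*}

def cross [CommRing K] (u v : K × K) : K := u.1 * v.2 - u.2 * v.1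

variable [Field K]

theorem exists_smul_eq_iff_cross_eq_zero {u : K × K} (hu : u ≠ 0) (v : K × K) :
    (∃ t : K, t • u = v) ↔ cross u v = 0 := by
  refine ⟨fun ⟨t, ht⟩ => by simp only [cross, ← ht, smul_fst, smul_snd, smul_eq_mul]; ring,
    fun h => ?_⟩
  rw [cross] at h
  by_cases hu₁ : u.1 = 0
  · have hu₂ : u.2 ≠ 0 := fun hu₂ => hu (Prod.ext hu₁ hu₂)
    refine ⟨v.2 / u.2, Prod.ext ?_ ?_⟩ <;> simp only [smul_fst, smul_snd, smul_eq_mul]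
    · rw [hu₁] at h ⊢
      simpa [hu₂, eq_comm] using h
    · field_simp
  · refine ⟨v.1 / u.1, Prod.ext ?_ ?_⟩ <;> simp only [smul_fst, smul_snd, smul_eq_mul]
    · field_simp
    · field_simp
      linear_combination -h

theorem collinear_iff_cross_sub_eq_zero (p q r : K × K) :
    Collinear K ({p, q, r} : Set (K × K)) ↔ cross (q - p) (r - p) = 0 := by
  rcases eq_or_ne p q with rfl | hpq
  · simp [cross, collinear_pair]
  rw [collinear_iff_mem_affineSpan_pair r hpq, mem_affineSpan_pair_iff_exists_lineMap_eq,
    ← exists_smul_eq_iff_cross_eq_zero (sub_ne_zero.2 hpq.symm)]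
  simp only [AffineMap.lineMap_apply, vsub_eq_sub, vadd_eq_add, eq_sub_iff_add_eq]

theorem cross_sub_sub_menelaus (A B C : K × K) {x y z : K} (hx : 1 + x ≠ 0) (hy : 1 + y ≠ 0)
    (hz : 1 + z ≠ 0) :
    cross ((1 + y)⁻¹ • (C + y • A) - (1 + x)⁻¹ • (B + x • C))
        ((1 + z)⁻¹ • (A + z • B) - (1 + x)⁻¹ • (B + x • C)) * ((1 + x) * (1 + y) * (1 + z)) =
      (x * y * z + 1) * cross (B - A) (C - A) := by
  simp only [cross, fst_sub, snd_sub, fst_add, snd_add, smul_fst, smul_snd, smul_eq_mul]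
  field_simp
  ring

end Prod

/-- Menelaus' theorem. -/
theorem menelaus (A B C Ax By Cz : ℝ × ℝ) (x y z : ℝ)
    (hABC : ¬ Collinear ℝ ({A, B, C} : Set (ℝ × ℝ)))
    (hden : (1 + x) * (1 + y) * (1 + z) ≠ 0)
    (hAx : Ax - B = x • (C - Ax))
    (hBy : By - C = y • (A - By))
    (hCz : Cz - A = z • (B - Cz)) :
    Collinear ℝ ({Ax, By, Cz} : Set (ℝ × ℝ)) ↔ x * y * z = -1 := by
  have hx : 1 + x ≠ 0 := left_ne_zero_of_mul (left_ne_zero_of_mul hden)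
  have hy : 1 + y ≠ 0 := right_ne_zero_of_mul (left_ne_zero_of_mul hden)
  have hz : 1 + z ≠ 0 := right_ne_zero_of_mul hden
  rw [Prod.collinear_iff_cross_sub_eq_zero] at hABC ⊢
  rw [eq_inv_smul_of_sub_eq_smul hx hAx, eq_inv_smul_of_sub_eq_smul hy hBy,
    eq_inv_smul_of_sub_eq_smul hz hCz, ← mul_left_inj' hden,
    Prod.cross_sub_sub_menelaus A B C hx hy hz, zero_mul, mul_eq_zero, or_iff_left hABC,
    add_eq_zero_iff_eq_neg]
end

section
/- (Ceva) Let A, B, C be non-collinear points and x,y,z real numbers with (1+x+xy)(1+y+yz)(1+z+zx) ≠ 0 and (1+x)(1+y)(1+z) ≠ 0. With A_x, B_y, C_z defined by vector(B,A_x)=x·vector(A_x,C), vector(C,B_y)=y·vector(B_y,A), vector(A,C_z)=z·vector(C_z,B), the three cevians AA_x, BB_y, CC_z are concurrent (pass through a common point) if and only if xyz = 1. -/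
/-!
In barycentric coordinates `(α : β : γ)` with respect to `A, B, C`, the cevian through `A_x` is
`γ = x β`, the one through `B_y` is `α = y γ` and the one through `C_z` is `β = z α`. A common point
thus has `β = xyz β` with `β ≠ 0`; conversely, when `xyz = 1` the point `(xy : 1 : x)` lies on all
three cevians, and it is an affine point because `1 + x + xy ≠ 0`.
-/

section
variable {k V : Type*} [Field k] [AddCommGroup V] [Module k V]

theorem one_add_ne_zero_of_sub_eq_smul {P Q R : V} {x : k} (h : Q - P = x • (R - Q))
    (hPR : P ≠ R) : 1 + x ≠ 0 := by
  intro hx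
  obtain rfl : x = -1 := by linear_combination hx
  exact hPR (by simpa [sub_eq_zero] using h)

theorem eq_of_not_collinear_of_smul_add_eq {A B C : V} (h : ¬Collinear k {A, B, C})
    {α β γ α' β' γ' : k} (hsum : α + β + γ = α' + β' + γ')
    (heq : α • A + β • B + γ • C = α' • A + β' • B + γ' • C) :
    α = α' ∧ β = β' ∧ γ = γ' := by
  have hind := (affineIndependent_iff_not_collinear_set (k := k)).2 h
  have := hind.eq_of_sum_eq_sum (s := Finset.univ) (w₁ := ![α, β, γ]) (w₂ := ![α', β', γ'])
    (by simpa [Fin.sum_univ_three] using hsum) (by simpa [Fin.sum_univ_three] using heq)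
  exact ⟨this 0 (by simp), this 1 (by simp), this 2 (by simp)⟩

theorem mem_affineSpan_cevian_iff_exists {A B C Ax X : V} {x : k} (hx : 1 + x ≠ 0)
    (hAx : Ax - B = x • (C - Ax)) :
    X ∈ line[k, A, Ax] ↔ ∃ β : k, X = (1 - (1 + x) * β) • A + β • B + (x * β) • C := by
  have hAx' : (1 + x) • Ax = B + x • C := by linear_combination (norm := module) hAx
  rw [mem_affineSpan_pair_iff_exists_lineMap_eq,
    (Equiv.mulLeft₀ (1 + x) hx).symm.exists_congr_left]
  refine exists_congr fun β => ?_
  rw [Equiv.symm_symm, Equiv.mulLeft₀_apply, AffineMap.lineMap_apply_module, mul_smul, smul_comm,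
    hAx', eq_comm]
  exact Iff.of_eq (congrArg (X = ·) (by module))

theorem mem_affineSpan_cevian_iff {A B C Ax X : V} {x a b c : k}
    (hABC : ¬Collinear k {A, B, C}) (hAx : Ax - B = x • (C - Ax)) (hsum : a + b + c = 1)
    (hX : X = a • A + b • B + c • C) :
    X ∈ line[k, A, Ax] ↔ c = x * b := by
  have hx := one_add_ne_zero_of_sub_eq_smul hAx (ne₂₃_of_not_collinear hABC)
  rw [mem_affineSpan_cevian_iff_exists hx hAx, hX]
  constructor
  · rintro ⟨t, ht⟩
    obtain ⟨-, rfl, rfl⟩ :=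
      eq_of_not_collinear_of_smul_add_eq hABC (by linear_combination hsum) ht
    rfl
  · rintro rfl
    exact ⟨b, by rw [show a = 1 - (1 + x) * b by linear_combination hsum]⟩

theorem mul_mul_eq_one_of_mem_cevians {A B C Ax By Cz X : V} {x y z : k}
    (hABC : ¬Collinear k {A, B, C}) (hAx : Ax - B = x • (C - Ax))
    (hBy : By - C = y • (A - By)) (hCz : Cz - A = z • (B - Cz))
    (hXA : X ∈ line[k, A, Ax]) (hXB : X ∈ line[k, B, By]) (hXC : X ∈ line[k, C, Cz]) :
    x * y * z = 1 := by
  have hBCA : ¬Collinear k {B, C, A} := by rwa [Set.pair_comm, Set.insert_comm]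
  have hCAB : ¬Collinear k {C, A, B} := by rwa [Set.insert_comm, Set.pair_comm]
  have hx := one_add_ne_zero_of_sub_eq_smul hAx (ne₂₃_of_not_collinear hABC)
  obtain ⟨β, rfl⟩ := (mem_affineSpan_cevian_iff_exists hx hAx).1 hXA
  have hsum : (1 - (1 + x) * β) + β + x * β = 1 := by ring
  have hαγ : 1 - (1 + x) * β = y * (x * β) :=
    (mem_affineSpan_cevian_iff (a := β) (b := x * β) (c := 1 - (1 + x) * β)
      hBCA hBy (by linear_combination hsum) (by abel)).1 hXB
  have hβα : β = z * (1 - (1 + x) * β) :=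
    (mem_affineSpan_cevian_iff (a := x * β) (b := 1 - (1 + x) * β) (c := β)
      hCAB hCz (by linear_combination hsum) (by abel)).1 hXC
  have hβ : β ≠ 0 := by
    rintro rfl
    norm_num at hαγ
  apply mul_left_cancel₀ hβ
  linear_combination -hβα - z * hαγ

theorem exists_mem_cevians_of_mul_mul_eq_one {A B C Ax By Cz : V} {x y z : k}
    (hABC : ¬Collinear k {A, B, C}) (hden : 1 + x + x * y ≠ 0) (hAx : Ax - B = x • (C - Ax))
    (hBy : By - C = y • (A - By)) (hCz : Cz - A = z • (B - Cz)) (hxyz : x * y * z = 1) :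
    ∃ X, X ∈ line[k, A, Ax] ∧ X ∈ line[k, B, By] ∧ X ∈ line[k, C, Cz] := by
  have hBCA : ¬Collinear k {B, C, A} := by rwa [Set.pair_comm, Set.insert_comm]
  have hCAB : ¬Collinear k {C, A, B} := by rwa [Set.insert_comm, Set.pair_comm]
  set β := (1 + x + x * y)⁻¹
  have hsum : x * y * β + β + x * β = 1 := by linear_combination mul_inv_cancel₀ hden
  refine ⟨(x * y * β) • A + β • B + (x * β) • C, ?_, ?_, ?_⟩
  · exact (mem_affineSpan_cevian_iff hABC hAx hsum rfl).2 rfl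
  · exact (mem_affineSpan_cevian_iff (a := β) (b := x * β) (c := x * y * β)
      hBCA hBy (by linear_combination hsum) (by abel)).2 (by ring)
  · exact (mem_affineSpan_cevian_iff (a := x * β) (b := x * y * β) (c := β)
      hCAB hCz (by linear_combination hsum) (by abel)).2 (by linear_combination -β * hxyz)

end

theorem ceva_general (A B C Ax By Cz : ℝ × ℝ) (x y z : ℝ)
    (hABC : ¬ Collinear ℝ ({A, B, C} : Set (ℝ × ℝ)))
    (hden2 : (1 + x + x * y) * (1 + y + y * z) * (1 + z + z * x) ≠ 0)
    (hAx : Ax - B = x • (C - Ax))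
    (hBy : By - C = y • (A - By))
    (hCz : Cz - A = z • (B - Cz)) :
    (∃ X : ℝ × ℝ, onLine X A Ax ∧ onLine X B By ∧ onLine X C Cz) ↔ x * y * z = 1 := by
  simp only [onLine]
  constructor
  · rintro ⟨X, hXA, hXB, hXC⟩
    exact mul_mul_eq_one_of_mem_cevians hABC hAx hBy hCz hXA hXB hXC
  · exact exists_mem_cevians_of_mul_mul_eq_one hABC
      (left_ne_zero_of_mul (left_ne_zero_of_mul hden2)) hAx hBy hCz

/-- Ceva's theorem. -/
theorem ceva (A B C Ax By Cz : ℝ × ℝ) (x y z : ℝ)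
    (hABC : ¬ Collinear ℝ ({A, B, C} : Set (ℝ × ℝ)))
    (hden2 : (1 + x + x * y) * (1 + y + y * z) * (1 + z + z * x) ≠ 0)
    (hden1 : (1 + x) * (1 + y) * (1 + z) ≠ 0)
    (hAx : Ax - B = x • (C - Ax))
    (hBy : By - C = y • (A - By))
    (hCz : Cz - A = z • (B - Cz)) :
    (∃ X : ℝ × ℝ, onLine X A Ax ∧ onLine X B By ∧ onLine X C Cz) ↔ x * y * z = 1 :=
  ceva_general A B C Ax By Cz x y z hABC hden2 hAx hBy hCz
end

section
/- (Unified Ceva–Menelaus) Under the hypotheses of the generalized Routh theorem (six real parameters x,y,z,u,v,w with (1+x+xv)(1+y+yw)(1+z+zu) ≠ 0 and the relevant denominators nonzero), the points P = AA_x ∩ BB_v, Q = BB_y ∩ CC_w, R = CC_z ∩ AA_u are collinear if and only if 1 - xyw - xzv - uyz + xyz + xyzuvw = 0. -/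
/-!
With respect to the triangle `ABC`, the cevians `AA_x` and `BB_v` meet in the point with
homogeneous barycentric coordinates `(xv : 1 : x)`; cyclically `Q = (y : yw : 1)` and
`R = (1 : z : zu)`. Three points of the plane are collinear iff the matrix of their barycentric
coordinates is singular, and the determinant of the matrix with these rows is
`1 - xyw - xzv - uyz + xyz + xyzuvw`.
-/

open Module

section

variable {ι k V : Type*} [Field k] [AddCommGroup V] [Module k V]

theorem AffineBasis.affineIndependent_iff_isUnit_toMatrix {P : Type*} [AddTorsor V P]
    [Fintype ι] [DecidableEq ι] [FiniteDimensional k V] (b : AffineBasis ι k P) (p : ι → P) :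
    AffineIndependent k p ↔ IsUnit (b.toMatrix p) := by
  rw [b.isUnit_toMatrix_iff]
  refine ⟨fun hp => ⟨hp, ?_⟩, And.left⟩
  rw [hp.affineSpan_eq_top_iff_card_eq_finrank_add_one]
  exact b.card_eq_finrank_add_one

theorem AffineBasis.coord_eq_div_of_smul_eq [Fintype ι] (b : AffineBasis ι k V) {w : ι → k}
    {p : V} (hw : ∑ j, w j ≠ 0) (hp : (∑ j, w j) • p = ∑ j, w j • b j) (i : ι) :
    b.coord i p = w i / ∑ j, w j := by
  have hsum : ∑ j, w j / ∑ j, w j = 1 := by rw [← Finset.sum_div, div_self hw]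
  have hp' : p = Finset.univ.affineCombination k b (fun j => w j / ∑ j, w j) := by
    rw [Finset.affineCombination_eq_linear_combination _ _ _ hsum, eq_inv_smul_iff₀ hw |>.2 hp,
      Finset.smul_sum]
    simp only [smul_smul, div_eq_inv_mul]
  rw [hp', b.coord_apply_combination_of_mem (Finset.mem_univ i) hsum]

theorem AffineBasis.det_toMatrix_of_smul_eq [Fintype ι] [DecidableEq ι] (b : AffineBasis ι k V)
    {p : ι → V} {W : Matrix ι ι k} (hW : ∀ i, ∑ j, W i j ≠ 0)
    (hp : ∀ i, (∑ j, W i j) • p i = ∑ j, W i j • b j) :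
    (b.toMatrix p).det = W.det / ∏ i, ∑ j, W i j := by
  have hdiag : b.toMatrix p = Matrix.diagonal (fun i => (∑ j, W i j)⁻¹) * W := by
    ext i j
    rw [b.toMatrix_apply, b.coord_eq_div_of_smul_eq (hW i) (hp i), Matrix.diagonal_mul,
      div_eq_inv_mul]
  rw [hdiag, Matrix.det_mul, Matrix.det_diagonal, Finset.prod_inv_distrib, div_eq_inv_mul]

theorem collinear_iff_det_eq_zero_of_smul_eq (hV : finrank k V = 2) {A B C P Q R : V}
    (hABC : AffineIndependent k ![A, B, C]) {W : Matrix (Fin 3) (Fin 3) k}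
    (hW : ∀ i, ∑ j, W i j ≠ 0)
    (hPQR : ∀ i, (∑ j, W i j) • ![P, Q, R] i = ∑ j, W i j • ![A, B, C] j) :
    Collinear k {P, Q, R} ↔ W.det = 0 := by
  have : FiniteDimensional k V := Module.finite_of_finrank_eq_succ hV
  let b : AffineBasis (Fin 3) k V := ⟨![A, B, C], hABC, by
    rw [hABC.affineSpan_eq_top_iff_card_eq_finrank_add_one, hV, Fintype.card_fin]⟩
  rw [← not_iff_not, ← affineIndependent_iff_not_collinear_set,
    b.affineIndependent_iff_isUnit_toMatrix, Matrix.isUnit_iff_isUnit_det, isUnit_iff_ne_zero,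
    b.det_toMatrix_of_smul_eq hW hPQR, div_ne_zero_iff,
    and_iff_left (Finset.prod_ne_zero_iff.2 fun i _ => hW i)]

theorem AffineIndependent.eq_zero_of_sum_eq_zero_fin_three {A B C : V}
    (h : AffineIndependent k ![A, B, C]) {a b c : k} (hs : a + b + c = 0)
    (hv : a • A + b • B + c • C = 0) :
    a = 0 ∧ b = 0 ∧ c = 0 := by
  have hzero := h.eq_zero_of_sum_eq_zero (s := Finset.univ) (w := ![a, b, c])
    (by simpa [Fin.sum_univ_three] using hs) (by simpa [Fin.sum_univ_three] using hv)
  exact ⟨hzero 0 (by simp), hzero 1 (by simp), hzero 2 (by simp)⟩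

theorem one_add_ne_zero_of_sub_eq_smul_sub {B C A' : V} {x : k} (hBC : B ≠ C)
    (h : A' - B = x • (C - A')) : 1 + x ≠ 0 := by
  intro hx
  exact hBC (by linear_combination (norm := module) -h + hx • (A' - C))

theorem AffineIndependent.smul_cevian_inter_eq {A B C A' B' P : V} {x v : k}
    (hABC : AffineIndependent k ![A, B, C])
    (hA' : A' - B = x • (C - A')) (hB' : B' - C = v • (A - B'))
    (hPA : P ∈ line[k, A, A']) (hPB : P ∈ line[k, B, B']) :
    (1 + x + x * v) • P = (x * v) • A + B + x • C := by
  have hx := one_add_ne_zero_of_sub_eq_smul_sub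
    (hABC.injective.ne (by decide : (1 : Fin 3) ≠ 2)) hA'
  have hv := one_add_ne_zero_of_sub_eq_smul_sub
    (hABC.injective.ne (by decide : (2 : Fin 3) ≠ 0)) hB'
  have hA'' : (1 + x) • A' = B + x • C := by linear_combination (norm := module) hA'
  have hB'' : (1 + v) • B' = C + v • A := by linear_combination (norm := module) hB'
  obtain ⟨s, rfl⟩ := mem_affineSpan_pair_iff_exists_lineMap_eq.1 hPA
  obtain ⟨t, ht⟩ := mem_affineSpan_pair_iff_exists_lineMap_eq.1 hPB
  simp only [AffineMap.lineMap_apply_module] at ht ⊢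
  -- the two expressions of `(1 + x) * (1 + v) • P` as combinations of `A`, `B`, `C` agree
  have hcomb : ((1 + v) * (1 + x) * (1 - s) - (1 + x) * t * v) • A
      + ((1 + v) * s - (1 + x) * (1 + v) * (1 - t)) • B
      + ((1 + v) * s * x - (1 + x) * t) • C = 0 := by
    linear_combination (norm := module)
      -((1 + x) * (1 + v)) • ht - ((1 + v) * s) • hA'' + ((1 + x) * t) • hB''
  obtain ⟨-, hb, hc⟩ := hABC.eq_zero_of_sum_eq_zero_fin_three (by ring) hcomb
  have hs : s * (1 + x + x * v) = 1 + x :=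
    mul_left_cancel₀ hv (by linear_combination hb + (1 + v) * hc)
  apply smul_right_injective V hx
  linear_combination (norm := module)
    ((1 + x + x * v) * s) • hA'' + hs • (B + x • C - (1 + x) • A)

end

theorem unified_ceva_menelaus_general (A B C Ax Au Bv By Cw Cz P Q R : ℝ × ℝ) (x y z u v w : ℝ)
    (hABC : ¬ Collinear ℝ ({A, B, C} : Set (ℝ × ℝ)))
    (hden2 : (1 + x + x * v) * (1 + y + y * w) * (1 + z + z * u) ≠ 0)
    (hAx : Ax - B = x • (C - Ax)) (hAu : Au - B = u • (C - Au))
    (hBy : By - C = y • (A - By)) (hBv : Bv - C = v • (A - Bv))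
    (hCz : Cz - A = z • (B - Cz)) (hCw : Cw - A = w • (B - Cw))
    (hP1 : onLine P A Ax) (hP2 : onLine P B Bv)
    (hQ1 : onLine Q B By) (hQ2 : onLine Q C Cw)
    (hR1 : onLine R C Cz) (hR2 : onLine R A Au) :
    Collinear ℝ ({P, Q, R} : Set (ℝ × ℝ)) ↔
      1 - x * y * w - x * z * v - u * y * z + x * y * z + x * y * z * u * v * w = 0 := by
  have hABC' := affineIndependent_iff_not_collinear_set.2 hABC
  have hBCA := affineIndependent_iff_not_collinear_set.2 (by rwa [Set.pair_comm, Set.insert_comm])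
  have hCAB := affineIndependent_iff_not_collinear_set.2 (by rwa [Set.insert_comm, Set.pair_comm])
  have hP := hABC'.smul_cevian_inter_eq hAx hBv hP1 hP2
  have hQ := hBCA.smul_cevian_inter_eq hBy hCw hQ1 hQ2
  have hR := hCAB.smul_cevian_inter_eq hCz hAu hR1 hR2
  obtain ⟨⟨hD1, hD2⟩, hD3⟩ := mul_ne_zero_iff.1 hden2 |>.imp_left mul_ne_zero_iff.1
  have hdet : !![x * v, 1, x; y, y * w, 1; 1, z, z * u].det =
      1 - x * y * w - x * z * v - u * y * z + x * y * z + x * y * z * u * v * w := by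
    rw [Matrix.det_fin_three]
    simp only [Matrix.of_apply, Matrix.cons_val', Matrix.cons_val_fin_one, Matrix.cons_val]
    ring
  rw [← hdet]
  apply collinear_iff_det_eq_zero_of_smul_eq (by simp) hABC'
  · simp only [Fin.forall_fin_succ, Fin.sum_univ_three, Matrix.of_apply, Matrix.cons_val',
      Matrix.cons_val_fin_one, Matrix.cons_val_zero, Matrix.cons_val_one, Matrix.cons_val_succ,
      Matrix.cons_val, ne_eq, forall_const]
    exact ⟨fun h => hD1 (by linear_combination h), fun h => hD2 (by linear_combination h), hD3⟩
  · simp only [Fin.forall_fin_succ, Fin.sum_univ_three, Matrix.of_apply, Matrix.cons_val',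
      Matrix.cons_val_fin_one, Matrix.cons_val_zero, Matrix.cons_val_one, Matrix.cons_val_succ,
      Matrix.cons_val, one_smul, forall_const]
    exact ⟨by linear_combination (norm := module) hP, by linear_combination (norm := module) hQ,
      by linear_combination (norm := module) hR⟩

/-- Unified Ceva–Menelaus theorem. -/
theorem unified_ceva_menelaus (A B C Ax Au Bv By Cw Cz P Q R : ℝ × ℝ) (x y z u v w : ℝ)
    (hABC : ¬ Collinear ℝ ({A, B, C} : Set (ℝ × ℝ)))
    (hden1 : (1 + x) * (1 + y) * (1 + z) * (1 + u) * (1 + v) * (1 + w) ≠ 0)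
    (hden2 : (1 + x + x * v) * (1 + y + y * w) * (1 + z + z * u) ≠ 0)
    (hAx : Ax - B = x • (C - Ax)) (hAu : Au - B = u • (C - Au))
    (hBy : By - C = y • (A - By)) (hBv : Bv - C = v • (A - Bv))
    (hCz : Cz - A = z • (B - Cz)) (hCw : Cw - A = w • (B - Cw))
    (hP1 : onLine P A Ax) (hP2 : onLine P B Bv)
    (hQ1 : onLine Q B By) (hQ2 : onLine Q C Cw)
    (hR1 : onLine R C Cz) (hR2 : onLine R A Au) :
    Collinear ℝ ({P, Q, R} : Set (ℝ × ℝ)) ↔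
      1 - x * y * w - x * z * v - u * y * z + x * y * z + x * y * z * u * v * w = 0 :=
  unified_ceva_menelaus_general A B C Ax Au Bv By Cw Cz P Q R x y z u v w hABC hden2 hAx hAu hBy hBv
    hCz hCw hP1 hP2 hQ1 hQ2 hR1 hR2
end

section
/- (Feynman's one-seventh triangle) Let A, B, C be non-collinear points and set x=y=z=2 in Routh's configuration: A_2 on BC with vector(B,A_2)=2·vector(A_2,C), B_2 on CA with vector(C,B_2)=2·vector(B_2,A), C_2 on AB with vector(A,C_2)=2·vector(C_2,B). Let P = AA_2 ∩ BB_2, Q = BB_2 ∩ CC_2, R = CC_2 ∩ AA_2. Then the area of triangle PQR is 1/7 of the area of triangle ABC. -/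
open scoped Affine

theorem linearIndependent_vsub_of_not_collinear {k V P : Type*} [DivisionRing k]
    [AddCommGroup V] [Module k V] [AddTorsor V P] {A B C : P} (h : ¬ Collinear k {A, B, C}) :
    LinearIndependent k ![B -ᵥ A, C -ᵥ A] := by
  rw [← affineIndependent_iff_not_collinear_set,
    affineIndependent_iff_linearIndependent_vsub k _ (0 : Fin 3),
    ← linearIndependent_equiv (finSuccAboveEquiv (0 : Fin 3))] at h
  convert h using 1
  · ext i
    fin_cases i <;> rfl
  · rfl

theorem eq_of_mem_trisecting_cevians {k V : Type*} [Field k] [CharZero k] [AddCommGroup V]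
    [Module k V] {A B C A' B' X : V} (hABC : ¬ Collinear k {A, B, C})
    (hA' : A' - B = (2 : k) • (C - A')) (hB' : B' - C = (2 : k) • (A - B'))
    (hXA : X ∈ line[k, A, A']) (hXB : X ∈ line[k, B, B']) :
    X = (4 / 7 : k) • A + (1 / 7 : k) • B + (2 / 7 : k) • C := by
  obtain ⟨s, rfl⟩ := mem_affineSpan_pair_iff_exists_lineMap_eq.mp hXA
  obtain ⟨t, hst⟩ := mem_affineSpan_pair_iff_exists_lineMap_eq.mp hXB
  simp only [AffineMap.lineMap_apply_module] at hst ⊢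
  have hdep : (s / 3 + t - 1) • (B - A) + (2 * s / 3 - t / 3) • (C - A) = 0 := by
    linear_combination (norm := module) -hst - (s / 3) • hA' + (t / 3) • hB'
  obtain ⟨h₁, h₂⟩ := LinearIndependent.pair_iff.mp
    (linearIndependent_vsub_of_not_collinear hABC) _ _ hdep
  have hs : s = 3 / 7 := by linear_combination (3 / 7) * h₁ + (9 / 7) * h₂
  subst hs
  linear_combination (norm := module) (1 / 7 : k) • hA'

/-- Feynman's one-seventh triangle. -/
theorem feynman_one_seventh (A B C Ax By Cz P Q R : ℝ × ℝ)
    (hABC : ¬ Collinear ℝ ({A, B, C} : Set (ℝ × ℝ)))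
    (hAx : Ax - B = (2 : ℝ) • (C - Ax))
    (hBy : By - C = (2 : ℝ) • (A - By))
    (hCz : Cz - A = (2 : ℝ) • (B - Cz))
    (hP1 : onLine P A Ax) (hP2 : onLine P B By)
    (hQ1 : onLine Q B By) (hQ2 : onLine Q C Cz)
    (hR1 : onLine R C Cz) (hR2 : onLine R A Ax) :
    |signedArea P Q R| = (1/7 : ℝ) * |signedArea A B C| := by
  have hBCA : ¬ Collinear ℝ ({B, C, A} : Set (ℝ × ℝ)) := by
    rwa [Set.pair_comm, Set.insert_comm]
  have hCAB : ¬ Collinear ℝ ({C, A, B} : Set (ℝ × ℝ)) := by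
    rwa [Set.insert_comm, Set.pair_comm]
  have harea : signedArea P Q R = 1 / 7 * signedArea A B C := by
    rw [eq_of_mem_trisecting_cevians hABC hAx hBy hP1 hP2,
      eq_of_mem_trisecting_cevians hBCA hBy hCz hQ1 hQ2,
      eq_of_mem_trisecting_cevians hCAB hCz hAx hR1 hR2]
    simp only [signedArea, Prod.fst_add, Prod.snd_add, Prod.smul_fst, Prod.smul_snd, smul_eq_mul]
    ring
  rw [harea, abs_mul, abs_of_pos (by norm_num : (0 : ℝ) < 1 / 7)]
end

section
/- In Routh's configuration with x=y=z=4 (cevians AA_4, BB_4, CC_4 where vector(B,A_4)=4·vector(A_4,C), etc.), the triangle of pairwise intersection points P, Q, R of the cevians has area equal to 3/7 of the area of triangle ABC. -/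
section Cevians

variable {k V : Type*} [Field k] [AddCommGroup V] [Module k V]

theorem AffineIndependent.eq_zero_of_smul_sub_add_smul_sub_eq_zero {A B C : V}
    (h : AffineIndependent k ![A, B, C]) {α β : k} (hαβ : α • (B - A) + β • (C - A) = 0) :
    α = 0 ∧ β = 0 := by
  have hw := affineIndependent_iff.mp h Finset.univ ![-(α + β), α, β]
    (by simp [Fin.sum_univ_succ])
    (by simp [Fin.sum_univ_succ]; linear_combination (norm := module) hαβ)
  exact ⟨hw 1 (Finset.mem_univ _), hw 2 (Finset.mem_univ _)⟩

theorem exists_sub_eq_smul_sub_of_mem_affineSpan_pair {P A B : V} (h : P ∈ line[k, A, B]) :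
    ∃ s : k, P - A = s • (B - A) := by
  obtain ⟨s, rfl⟩ := mem_affineSpan_pair_iff_exists_lineMap_eq.mp h
  exact ⟨s, by simp [AffineMap.lineMap_apply_module']⟩

theorem cevian_intersection_eq {A B C A' B' P : V} {x y : k}
    (hABC : AffineIndependent k ![A, B, C]) (hA' : A' - B = x • (C - A')) (hB' : B' - C = y • (A - B'))
    (hPA : P ∈ line[k, A, A']) (hPB : P ∈ line[k, B, B']) :
    1 + x + x * y ≠ 0 ∧
      P = (x * y / (1 + x + x * y)) • A + (1 / (1 + x + x * y)) • B + (x / (1 + x + x * y)) • C := by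
  obtain ⟨s, hs⟩ := exists_sub_eq_smul_sub_of_mem_affineSpan_pair hPA
  obtain ⟨t, ht⟩ := exists_sub_eq_smul_sub_of_mem_affineSpan_pair hPB
  have hA'' : (1 + x) • (A' - A) = (B - A) + x • (C - A) := by
    linear_combination (norm := module) hA'
  have hB'' : (1 + y) • (B' - A) = C - A := by
    linear_combination (norm := module) hB'
  have hx : 1 + x ≠ 0 := fun hx => one_ne_zero
    (hABC.eq_zero_of_smul_sub_add_smul_sub_eq_zero (α := 1) (β := x)
      (by rw [one_smul, ← hA'', hx, zero_smul])).1
  have hy : 1 + y ≠ 0 := fun hy => one_ne_zero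
    (hABC.eq_zero_of_smul_sub_add_smul_sub_eq_zero (α := 0) (β := 1)
      (by rw [zero_smul, one_smul, zero_add, ← hB'', hy, zero_smul])).2
  obtain ⟨hcoefB, hcoefC⟩ := hABC.eq_zero_of_smul_sub_add_smul_sub_eq_zero
    (α := (1 + y) * s - (1 + x) * (1 + y) * (1 - t)) (β := (1 + y) * s * x - (1 + x) * t) (by
      linear_combination (norm := module) (-((1 + y) * s)) • hA'' - ((1 + x) * (1 + y)) • hs
        + ((1 + x) * (1 + y)) • ht + ((1 + x) * t) • hB'')
  set d := 1 + x + x * y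
  -- `d = 0` would make the two cevians parallel; here it is excluded by `t * d = d - 1`.
  have htd : t * d = d - 1 := mul_left_cancel₀ hx (by linear_combination x * hcoefB - hcoefC)
  have hd : d ≠ 0 := fun h => by simp [h] at htd
  have hs' : s = (1 + x) * (1 / d) := by
    have h1t : 1 - t = 1 / d := by field_simp; linear_combination -htd
    rw [← h1t]; exact mul_left_cancel₀ hy (by linear_combination hcoefB)
  have hPA' : P - A = (1 / d) • ((B - A) + x • (C - A)) := smul_right_injective V hx <| by
    subst hs'
    linear_combination (norm := module) (1 + x) • hs + ((1 + x) * (1 / d)) • hA''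
  refine ⟨hd, ?_⟩
  rw [show x * y / d = 1 - 1 / d - x / d by field_simp; ring]
  linear_combination (norm := module) hPA'

end Cevians

theorem signedArea_barycentric (A B C : ℝ × ℝ) {a₁ a₂ a₃ b₁ b₂ b₃ c₁ c₂ c₃ : ℝ}
    (ha : a₁ + a₂ + a₃ = 1) (hb : b₁ + b₂ + b₃ = 1) (hc : c₁ + c₂ + c₃ = 1) :
    signedArea (a₁ • A + a₂ • B + a₃ • C) (b₁ • A + b₂ • B + b₃ • C) (c₁ • A + c₂ • B + c₃ • C) =
      !![a₁, a₂, a₃; b₁, b₂, b₃; c₁, c₂, c₃].det * signedArea A B C := by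
  obtain rfl : a₃ = 1 - a₁ - a₂ := by linarith
  obtain rfl : b₃ = 1 - b₁ - b₂ := by linarith
  obtain rfl : c₃ = 1 - c₁ - c₂ := by linarith
  simp only [signedArea, Prod.fst_add, Prod.smul_fst, smul_eq_mul, Prod.snd_add, Prod.smul_snd,
    Matrix.det_fin_three, Matrix.of_apply, Matrix.cons_val', Matrix.cons_val_zero,
    Matrix.cons_val_fin_one, Matrix.cons_val_one, Matrix.cons_val]
  ring

theorem signedArea_routh {A B C A' B' C' P Q R : ℝ × ℝ} {x y z : ℝ}
    (hABC : AffineIndependent ℝ ![A, B, C])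
    (hA' : A' - B = x • (C - A')) (hB' : B' - C = y • (A - B')) (hC' : C' - A = z • (B - C'))
    (hPA : onLine P A A') (hPB : onLine P B B') (hQB : onLine Q B B') (hQC : onLine Q C C')
    (hRC : onLine R C C') (hRA : onLine R A A') :
    signedArea P Q R =
      (x * y * z - 1) ^ 2 / ((1 + x + x * y) * (1 + y + y * z) * (1 + z + z * x)) *
        signedArea A B C := by
  have hBCA : AffineIndependent ℝ ![B, C, A] := hABC.comm_left.comm_right
  have hCAB : AffineIndependent ℝ ![C, A, B] := hBCA.comm_left.comm_right
  obtain ⟨hdP, hP⟩ := cevian_intersection_eq hABC hA' hB' hPA hPB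
  obtain ⟨hdQ, hQ⟩ := cevian_intersection_eq hBCA hB' hC' hQB hQC
  obtain ⟨hdR, hR⟩ := cevian_intersection_eq hCAB hC' hA' hRC hRA
  rw [hP, hQ, hR, ← add_rotate (_ • A) (_ • B) (_ • C), add_rotate (_ • C) (_ • A) (_ • B),
    signedArea_barycentric A B C
      (by rw [← add_div, ← add_div, div_eq_one_iff_eq hdP]; ring)
      (by rw [← add_div, ← add_div, div_eq_one_iff_eq hdQ]; ring)
      (by rw [← add_div, ← add_div, div_eq_one_iff_eq hdR])]
  congr 1
  simp only [Matrix.det_fin_three, Matrix.of_apply, Matrix.cons_val', Matrix.cons_val_zero,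
    Matrix.cons_val_fin_one, Matrix.cons_val_one, Matrix.cons_val]
  field_simp
  ring

/-- Routh's configuration with x=y=z=4. -/
theorem routh_four_four_four (A B C Ax By Cz P Q R : ℝ × ℝ)
    (hABC : ¬ Collinear ℝ ({A, B, C} : Set (ℝ × ℝ)))
    (hAx : Ax - B = (4 : ℝ) • (C - Ax))
    (hBy : By - C = (4 : ℝ) • (A - By))
    (hCz : Cz - A = (4 : ℝ) • (B - Cz))
    (hP1 : onLine P A Ax) (hP2 : onLine P B By)
    (hQ1 : onLine Q B By) (hQ2 : onLine Q C Cz)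
    (hR1 : onLine R C Cz) (hR2 : onLine R A Ax) :
    |signedArea P Q R| = (3/7 : ℝ) * |signedArea A B C| := by
  rw [signedArea_routh (affineIndependent_iff_not_collinear_set.mpr hABC) hAx hBy hCz
    hP1 hP2 hQ1 hQ2 hR1 hR2, abs_mul]
  norm_num
end

section
/- In the generalized Routh configuration with u=v=w=7 and x=y=z=1, the triangle PQR of intersection points has area equal to 4/9 of the area of triangle ABC. -/
def cross (u w : ℝ × ℝ) : ℝ := u.1 * w.2 - u.2 * w.1

theorem signedArea_eq_cross (A B C : ℝ × ℝ) : signedArea A B C = cross (B - A) (C - A) / 2 := by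
  simp only [signedArea, cross, Prod.fst_sub, Prod.snd_sub]
  ring

theorem signedArea_rotate (A B C : ℝ × ℝ) : signedArea B C A = signedArea A B C := by
  unfold signedArea; ring

theorem onLine_iff {P A B : ℝ × ℝ} : onLine P A B ↔ ∃ t : ℝ, P - A = t • (B - A) := by
  conv_lhs => rw [onLine, ← vsub_vadd P A, vadd_left_mem_affineSpan_pair]
  simp only [vsub_eq_sub, eq_comm]

theorem exists_eq_smul_of_cross_eq_zero {u w : ℝ × ℝ} (hu : u ≠ 0) (h : cross u w = 0) :
    ∃ r : ℝ, w = r • u := by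
  unfold cross at h
  have h₁ : u.1 • w = w.1 • u := by
    ext <;> simp only [Prod.smul_fst, Prod.smul_snd, smul_eq_mul] <;> linarith
  have h₂ : u.2 • w = w.2 • u := by
    ext <;> simp only [Prod.smul_fst, Prod.smul_snd, smul_eq_mul] <;> linarith
  have hu' : u.1 ≠ 0 ∨ u.2 ≠ 0 := by
    by_contra! h0
    exact hu (Prod.ext h0.1 h0.2)
  rcases hu' with hu₁ | hu₂
  · exact ⟨w.1 / u.1, by rw [div_eq_inv_mul, mul_smul, ← h₁, inv_smul_smul₀ hu₁]⟩
  · exact ⟨w.2 / u.2, by rw [div_eq_inv_mul, mul_smul, ← h₂, inv_smul_smul₀ hu₂]⟩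

theorem collinear_of_signedArea_eq_zero {A B C : ℝ × ℝ} (h : signedArea A B C = 0) :
    Collinear ℝ ({A, B, C} : Set (ℝ × ℝ)) := by
  by_cases hBA : B = A
  · subst hBA
    simpa using collinear_pair ℝ B C
  · obtain ⟨r, hr⟩ := exists_eq_smul_of_cross_eq_zero (sub_ne_zero.2 hBA)
      (by rw [signedArea_eq_cross] at h; linarith)
    have hC : C ∈ line[ℝ, A, B] := by
      rw [← vsub_vadd C A, vadd_left_mem_affineSpan_pair]
      exact ⟨r, hr.symm⟩
    have := collinear_insert_of_mem_affineSpan_pair hC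
    rwa [Set.insert_comm, Set.pair_comm] at this

theorem eq_of_onLine_of_onLine {A A' B B' P X : ℝ × ℝ} (hAB : cross (A' - A) (B' - B) ≠ 0)
    (hPA : onLine P A A') (hPB : onLine P B B') (hXA : onLine X A A') (hXB : onLine X B B') :
    P = X := by
  obtain ⟨t, ht⟩ := onLine_iff.1 hPA
  obtain ⟨s, hs⟩ := onLine_iff.1 hPB
  obtain ⟨t', ht'⟩ := onLine_iff.1 hXA
  obtain ⟨s', hs'⟩ := onLine_iff.1 hXB
  have hts : (t - t') • (A' - A) = (s - s') • (B' - B) := by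
    rw [sub_smul, sub_smul, ← ht, ← ht', ← hs, ← hs']; abel
  have htt' : (t - t') * cross (A' - A) (B' - B) = 0 := by
    rw [Prod.ext_iff] at hts
    simp only [Prod.smul_fst, Prod.smul_snd, smul_eq_mul] at hts
    unfold cross
    linear_combination (B' - B).2 * hts.1 - (B' - B).1 * hts.2
  have : t = t' := sub_eq_zero.1 ((mul_eq_zero.1 htt').resolve_right hAB)
  rw [← sub_add_cancel P A, ← sub_add_cancel X A, ht, ht', this]

theorem eq_inv_smul_of_sub_eq_smul_sub {K V : Type*} [Field K] [AddCommGroup V] [Module K V]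
    {B C X : V} {t : K} (h : X - B = t • (C - X)) (ht : 1 + t ≠ 0) :
    X = (1 + t)⁻¹ • (B + t • C) := by
  rw [eq_inv_smul_iff₀ ht]
  linear_combination (norm := module) h

theorem signedArea_barycentric_s15 (A B C : ℝ × ℝ) (M : Matrix (Fin 3) (Fin 3) ℝ)
    (hM : ∀ i, M i 0 + M i 1 + M i 2 = 1) :
    signedArea (M 0 0 • A + M 0 1 • B + M 0 2 • C) (M 1 0 • A + M 1 1 • B + M 1 2 • C)
      (M 2 0 • A + M 2 1 • B + M 2 2 • C) = M.det * signedArea A B C := by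
  rw [Matrix.det_fin_three, show M 0 2 = 1 - M 0 0 - M 0 1 by linarith [hM 0],
    show M 1 2 = 1 - M 1 0 - M 1 1 by linarith [hM 1],
    show M 2 2 = 1 - M 2 0 - M 2 1 by linarith [hM 2]]
  simp only [signedArea, Prod.fst_add, Prod.snd_add, Prod.smul_fst, Prod.smul_snd, smul_eq_mul]
  ring

theorem cevian_intersection_eq_s15 {x v : ℝ} {A B C Ax Bv P : ℝ × ℝ} (hx : 1 + x ≠ 0) (hv : 1 + v ≠ 0)
    (hxv : 1 + x + v * x ≠ 0) (hABC : signedArea A B C ≠ 0)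
    (hAx : Ax - B = x • (C - Ax)) (hBv : Bv - C = v • (A - Bv))
    (hPA : onLine P A Ax) (hPB : onLine P B Bv) :
    P = (v * x / (1 + x + v * x)) • A + (1 / (1 + x + v * x)) • B + (x / (1 + x + v * x)) • C := by
  obtain rfl := eq_inv_smul_of_sub_eq_smul_sub hAx hx
  obtain rfl := eq_inv_smul_of_sub_eq_smul_sub hBv hv
  refine eq_of_onLine_of_onLine ?_ hPA hPB (onLine_iff.2 ⟨(1 + x) / (1 + x + v * x), ?_⟩)
    (onLine_iff.2 ⟨x * (1 + v) / (1 + x + v * x), ?_⟩)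
  · have hcross : cross ((1 + x)⁻¹ • (B + x • C) - A) ((1 + v)⁻¹ • (C + v • A) - B) =
        (1 + x + v * x) / ((1 + x) * (1 + v)) * (2 * signedArea A B C) := by
      simp only [cross, signedArea, Prod.fst_sub, Prod.snd_sub, Prod.fst_add, Prod.snd_add,
        Prod.smul_fst, Prod.smul_snd, smul_eq_mul]
      field_simp
      ring
    rw [hcross]
    exact mul_ne_zero (div_ne_zero hxv (mul_ne_zero hx hv)) (mul_ne_zero two_ne_zero hABC)
  all_goals
    ext <;> simp only [Prod.fst_sub, Prod.snd_sub, Prod.fst_add, Prod.snd_add, Prod.smul_fst,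
      Prod.smul_snd, smul_eq_mul] <;> field_simp <;> ring

/-- Generalized Routh configuration with x=y=z=1, u=v=w=7. -/
theorem generalized_routh_x1_u7 (A B C Ax Au Bv By Cw Cz P Q R : ℝ × ℝ)
    (hABC : ¬ Collinear ℝ ({A, B, C} : Set (ℝ × ℝ)))
    (hAx : Ax - B = (1 : ℝ) • (C - Ax)) (hAu : Au - B = (7 : ℝ) • (C - Au))
    (hBy : By - C = (1 : ℝ) • (A - By)) (hBv : Bv - C = (7 : ℝ) • (A - Bv))
    (hCz : Cz - A = (1 : ℝ) • (B - Cz)) (hCw : Cw - A = (7 : ℝ) • (B - Cw))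
    (hP1 : onLine P A Ax) (hP2 : onLine P B Bv)
    (hQ1 : onLine Q B By) (hQ2 : onLine Q C Cw)
    (hR1 : onLine R C Cz) (hR2 : onLine R A Au) :
    |signedArea P Q R| = (4/9 : ℝ) * |signedArea A B C| := by
  have hS : signedArea A B C ≠ 0 := mt collinear_of_signedArea_eq_zero hABC
  have hP := cevian_intersection_eq_s15 (by norm_num) (by norm_num) (by norm_num) hS hAx hBv hP1 hP2
  have hQ := cevian_intersection_eq_s15 (by norm_num) (by norm_num) (by norm_num)
    (by rwa [signedArea_rotate]) hBy hCw hQ1 hQ2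
  have hR := cevian_intersection_eq_s15 (by norm_num) (by norm_num) (by norm_num)
    (by rwa [← signedArea_rotate]) hCz hAu hR1 hR2
  set M : Matrix (Fin 3) (Fin 3) ℝ :=
    !![7 / 9, 1 / 9, 1 / 9; 1 / 9, 7 / 9, 1 / 9; 1 / 9, 1 / 9, 7 / 9]
  have hrows : ∀ i, M i 0 + M i 1 + M i 2 = 1 := by
    intro i; fin_cases i <;> simp [M] <;> ring
  have hdet : M.det = 4 / 9 := by
    simp [M, Matrix.det_fin_three]; ring
  have harea : signedArea P Q R = M.det * signedArea A B C := by
    rw [← signedArea_barycentric_s15 _ _ _ _ hrows, hP, hQ, hR]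
    congr 1 <;> simp only [M, Matrix.of_apply, Matrix.cons_val', Matrix.cons_val_zero,
      Matrix.cons_val_fin_one, Matrix.cons_val_one, Matrix.cons_val, Fin.isValue] <;> module
  rw [harea, hdet, abs_mul]
  norm_num
end

section
/- In the generalized Routh configuration with u=v=w=4 and x=y=z=1/2, the triangle PQR of intersection points has area equal to 1/7 of the area of triangle ABC. -/
section Cevians

variable {k V : Type*} [Field k] [AddCommGroup V] [Module k V]

theorem linearIndependent_sub_of_not_collinear {A B C : V}
    (h : ¬ Collinear k ({A, B, C} : Set V)) : LinearIndependent k ![B - A, C - A] := by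
  rw [← affineIndependent_iff_not_collinear_set,
    affineIndependent_iff_linearIndependent_vsub k _ 0] at h
  convert h.comp _ (finSuccAboveEquiv (0 : Fin 3)).injective using 2
  · ext i
    fin_cases i <;> rfl
  · rfl

theorem cevian_inter_smul_eq {A B C D E P : V} {x y : k}
    (hABC : ¬ Collinear k ({A, B, C} : Set V))
    (hD : D - B = x • (C - D)) (hE : E - C = y • (A - E)) (hy : 1 + y ≠ 0)
    (hPD : P ∈ line[k, A, D]) (hPE : P ∈ line[k, B, E]) :
    (1 + x + x * y) • P = (x * y) • A + B + x • C := by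
  obtain ⟨s, rfl⟩ := mem_affineSpan_pair_iff_exists_lineMap_eq.1 hPD
  obtain ⟨t, hst⟩ := mem_affineSpan_pair_iff_exists_lineMap_eq.1 hPE
  simp only [AffineMap.lineMap_apply_module] at hst ⊢
  have hD' : (1 + x) • D = B + x • C := by linear_combination (norm := module) hD
  have hE' : (1 + y) • E = C + y • A := by linear_combination (norm := module) hE
  -- compare the coordinates of the two descriptions of the point in the frame `(A; B - A, C - A)`
  obtain ⟨h1, h2⟩ := LinearIndependent.pair_iff.1 (linearIndependent_sub_of_not_collinear hABC)
    (s * (1 + y) - (1 + x) * (1 + y) * (1 - t)) (s * (1 + y) * x - t * (1 + x)) (by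
      linear_combination (norm := module)
        (t * (1 + x)) • hE' - ((1 + x) * (1 + y)) • hst - (s * (1 + y)) • hD')
  have hs_eq : s = (1 + x) * (1 - t) := by
    have : (1 + y) * (s - (1 + x) * (1 - t)) = 0 := by linear_combination h1
    linear_combination (mul_eq_zero.1 this).resolve_left hy
  have hs : s * (1 + x + x * y) = 1 + x := by linear_combination hs_eq + h2
  linear_combination (norm := module) hs • (D - A) + hD'

end Cevians

/-- Generalized Routh configuration with x=y=z=1/2, u=v=w=4. -/
theorem generalized_routh_xhalf_u4 (A B C Ax Au Bv By Cw Cz P Q R : ℝ × ℝ)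
    (hABC : ¬ Collinear ℝ ({A, B, C} : Set (ℝ × ℝ)))
    (hAx : Ax - B = (1/2 : ℝ) • (C - Ax)) (hAu : Au - B = (4 : ℝ) • (C - Au))
    (hBy : By - C = (1/2 : ℝ) • (A - By)) (hBv : Bv - C = (4 : ℝ) • (A - Bv))
    (hCz : Cz - A = (1/2 : ℝ) • (B - Cz)) (hCw : Cw - A = (4 : ℝ) • (B - Cw))
    (hP1 : onLine P A Ax) (hP2 : onLine P B Bv)
    (hQ1 : onLine Q B By) (hQ2 : onLine Q C Cw)
    (hR1 : onLine R C Cz) (hR2 : onLine R A Au) :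
    |signedArea P Q R| = (1/7 : ℝ) * |signedArea A B C| := by
  have hBCA : ¬ Collinear ℝ ({B, C, A} : Set (ℝ × ℝ)) := by
    rwa [Set.pair_comm C A, Set.insert_comm B A]
  have hCAB : ¬ Collinear ℝ ({C, A, B} : Set (ℝ × ℝ)) := by
    rwa [Set.insert_comm C A, Set.pair_comm C B]
  have hP : P = (4/7 : ℝ) • A + (2/7 : ℝ) • B + (1/7 : ℝ) • C := by
    have := cevian_inter_smul_eq hABC hAx hBv (by norm_num) hP1 hP2
    linear_combination (norm := module) (2/7 : ℝ) • this
  have hQ : Q = (1/7 : ℝ) • A + (4/7 : ℝ) • B + (2/7 : ℝ) • C := by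
    have := cevian_inter_smul_eq hBCA hBy hCw (by norm_num) hQ1 hQ2
    linear_combination (norm := module) (2/7 : ℝ) • this
  have hR : R = (2/7 : ℝ) • A + (1/7 : ℝ) • B + (4/7 : ℝ) • C := by
    have := cevian_inter_smul_eq hCAB hCz hAu (by norm_num) hR1 hR2
    linear_combination (norm := module) (2/7 : ℝ) • this
  rw [hP, hQ, hR, signedArea_barycentric A B C (by norm_num) (by norm_num) (by norm_num), abs_mul]
  congr
  simp [Matrix.det_fin_three]
  norm_num
end

section
/- In Routh's configuration with x=7, y=6, z=3, the Routh triangle PQR has area equal to 1/2 of the area of triangle ABC. -/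
/-! Work in affine coordinates with respect to the frame `(A; B - A, C - A)`: non-collinearity of
`A, B, C` makes these coordinates unique, so each of `P, Q, R` is found by solving a 2 × 2 linear
system, and signed area scales by the determinant of the coordinate differences, which here is
`1 / 2`. -/

section Frame

variable {k V : Type*} [Field k] [AddCommGroup V] [Module k V]

def ofFrame (A B C : V) (x y : k) : V := A + (x • (B - A) + y • (C - A))

theorem ofFrame_injective {A B C : V} (h : LinearIndependent k ![B - A, C - A]) {x y x' y' : k}
    (he : ofFrame A B C x y = ofFrame A B C x' y') : x = x' ∧ y = y' :=
  h.eq_of_pair (add_left_cancel he)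

@[simp] theorem ofFrame_zero_zero (A B C : V) : ofFrame A B C (0 : k) 0 = A := by
  simp [ofFrame]

@[simp] theorem ofFrame_one_zero (A B C : V) : ofFrame A B C (1 : k) 0 = B := by
  simp [ofFrame]

@[simp] theorem ofFrame_zero_one (A B C : V) : ofFrame A B C (0 : k) 1 = C := by
  simp [ofFrame]

theorem lineMap_ofFrame (A B C : V) (x y x' y' t : k) :
    AffineMap.lineMap (ofFrame A B C x y) (ofFrame A B C x' y') t =
      ofFrame A B C (x + t * (x' - x)) (y + t * (y' - y)) := by
  simp only [AffineMap.lineMap_apply_module, ofFrame]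
  module

theorem exists_eq_ofFrame_of_mem_affineSpan_pair {A B C X Y P : V} {x y x' y' : k}
    (hX : X = ofFrame A B C x y) (hY : Y = ofFrame A B C x' y') (hP : P ∈ line[k, X, Y]) :
    ∃ t : k, P = ofFrame A B C (x + t * (x' - x)) (y + t * (y' - y)) := by
  obtain ⟨t, rfl⟩ := mem_affineSpan_pair_iff_exists_lineMap_eq.mp hP
  exact ⟨t, hX ▸ hY ▸ lineMap_ofFrame A B C x y x' y' t⟩

theorem eq_ofFrame_of_mem_inter {A B C X Y Z W P : V} {x₁ x₂ y₁ y₂ z₁ z₂ w₁ w₂ p₁ p₂ : k}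
    (h : LinearIndependent k ![B - A, C - A])
    (hX : X = ofFrame A B C x₁ x₂) (hY : Y = ofFrame A B C y₁ y₂)
    (hZ : Z = ofFrame A B C z₁ z₂) (hW : W = ofFrame A B C w₁ w₂)
    (hXY : P ∈ line[k, X, Y]) (hZW : P ∈ line[k, Z, W])
    (hsol : ∀ s t : k, x₁ + s * (y₁ - x₁) = z₁ + t * (w₁ - z₁) →
      x₂ + s * (y₂ - x₂) = z₂ + t * (w₂ - z₂) → x₁ + s * (y₁ - x₁) = p₁ ∧ x₂ + s * (y₂ - x₂) = p₂) :
    P = ofFrame A B C p₁ p₂ := by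
  obtain ⟨s, hs⟩ := exists_eq_ofFrame_of_mem_affineSpan_pair hX hY hXY
  obtain ⟨t, ht⟩ := exists_eq_ofFrame_of_mem_affineSpan_pair hZ hW hZW
  obtain ⟨h₁, h₂⟩ := ofFrame_injective h (hs.symm.trans ht)
  obtain ⟨rfl, rfl⟩ := hsol s t h₁ h₂
  exact hs

end Frame

theorem signedArea_ofFrame (A B C : ℝ × ℝ) (a₁ a₂ b₁ b₂ c₁ c₂ : ℝ) :
    signedArea (ofFrame A B C a₁ a₂) (ofFrame A B C b₁ b₂) (ofFrame A B C c₁ c₂) =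
      ((b₁ - a₁) * (c₂ - a₂) - (c₁ - a₁) * (b₂ - a₂)) * signedArea A B C := by
  simp only [signedArea, ofFrame, Prod.fst_add, Prod.snd_add, Prod.smul_fst, Prod.smul_snd,
    Prod.fst_sub, Prod.snd_sub, smul_eq_mul]
  ring

/-- Routh's configuration with x=7, y=6, z=3. -/
theorem routh_7_6_3 (A B C Ax By Cz P Q R : ℝ × ℝ)
    (hABC : ¬ Collinear ℝ ({A, B, C} : Set (ℝ × ℝ)))
    (hAx : Ax - B = (7 : ℝ) • (C - Ax))
    (hBy : By - C = (6 : ℝ) • (A - By))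
    (hCz : Cz - A = (3 : ℝ) • (B - Cz))
    (hP1 : onLine P A Ax) (hP2 : onLine P B By)
    (hQ1 : onLine Q B By) (hQ2 : onLine Q C Cz)
    (hR1 : onLine R C Cz) (hR2 : onLine R A Ax) :
    |signedArea P Q R| = (1/2 : ℝ) * |signedArea A B C| := by
  have h := linearIndependent_sub_of_not_collinear hABC
  have hA : A = ofFrame A B C (0 : ℝ) 0 := (ofFrame_zero_zero A B C).symm
  have hB : B = ofFrame A B C (1 : ℝ) 0 := (ofFrame_one_zero A B C).symm
  have hC : C = ofFrame A B C (0 : ℝ) 1 := (ofFrame_zero_one A B C).symm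
  have hAx' : Ax = ofFrame A B C (1 / 8 : ℝ) (7 / 8) := by
    unfold ofFrame; linear_combination (norm := module) (1 / 8 : ℝ) • hAx
  have hBy' : By = ofFrame A B C (0 : ℝ) (1 / 7) := by
    unfold ofFrame; linear_combination (norm := module) (1 / 7 : ℝ) • hBy
  have hCz' : Cz = ofFrame A B C (3 / 4 : ℝ) 0 := by
    unfold ofFrame; linear_combination (norm := module) (1 / 4 : ℝ) • hCz
  have hP : P = ofFrame A B C (1 / 50 : ℝ) (7 / 50) :=
    eq_ofFrame_of_mem_inter h hA hAx' hB hBy' hP1 hP2 fun _ _ _ _ ↦ by constructor <;> linarith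
  have hQ : Q = ofFrame A B C (18 / 25 : ℝ) (1 / 25) :=
    eq_ofFrame_of_mem_inter h hB hBy' hC hCz' hQ1 hQ2 fun _ _ _ _ ↦ by constructor <;> linarith
  have hR : R = ofFrame A B C (3 / 25 : ℝ) (21 / 25) :=
    eq_ofFrame_of_mem_inter h hC hCz' hA hAx' hR1 hR2 fun _ _ _ _ ↦ by constructor <;> linarith
  rw [hP, hQ, hR, signedArea_ofFrame, abs_mul]
  norm_num
end
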